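/- The σ-ideal J₀(λ) on the compactum [0,1] is not homogeneous, and the σ-ideals J₀(H¹) and J_f(H¹) on the compactum [0,1]² are not homogeneous. -/

import Mathlib

open MeasureTheory Topology Filter Set ENNReal

/-- `J₀(μ)`: Borel sets coverable by countably many compact sets of `μ`-measure zero. -/
def Jzero {X : Type*} [TopologicalSpace X] [MeasurableSpace X] (μ : Measure X) :
    Set (Set X) :=
  {A | MeasurableSet A ∧
    ∃ K : ℕ → Set X, (∀ n, IsCompact (K n) ∧ μ (K n) = 0) ∧ A ⊆ ⋃ n, K n}

/-- `J_f(μ)`: Borel sets coverable by countably many compact sets of finite `μ`-measure. -/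
def Jfin {X : Type*} [TopologicalSpace X] [MeasurableSpace X] (μ : Measure X) :
    Set (Set X) :=
  {A | MeasurableSet A ∧
    ∃ K : ℕ → Set X, (∀ n, IsCompact (K n) ∧ μ (K n) < ⊤) ∧ A ⊆ ⋃ n, K n}

/-- `μ` is semifinite: every Borel set of positive measure contains a Borel subset of
finite positive measure. -/
def Semifinite {X : Type*} [MeasurableSpace X] (μ : Measure X) : Prop :=
  ∀ A : Set X, MeasurableSet A → 0 < μ A →
    ∃ B ⊆ A, MeasurableSet B ∧ 0 < μ B ∧ μ B < ⊤

/-- The σ-ideal `I` on `X` is homogeneous: for every Borel `E ∉ I` there is a Borel map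
`f : X → X` with range contained in `E` such that `f⁻¹(A) ∈ I` whenever `A ∈ I`. -/
def IsHomogeneousIdeal {X : Type*} [TopologicalSpace X] [MeasurableSpace X]
    (I : Set (Set X)) : Prop :=
  ∀ E : Set X, MeasurableSet E → E ∉ I →
    ∃ f : X → X, Measurable f ∧ Set.range f ⊆ E ∧ ∀ A ∈ I, f ⁻¹' A ∈ I

/-- The Euclidean square `[0,1]²`, as a subspace of the Euclidean plane. -/
def SqSet : Set (EuclideanSpace ℝ (Fin 2)) := {x | ∀ i, x i ∈ Set.Icc (0 : ℝ) 1}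

/-! If `I ⊆ J₀(μ)` for a finite Borel measure `μ` charging every nonempty open set, the members
of `I` are meagre and `μ`-null. A residual Borel set `E` of `H¹`-measure zero is then not in `I`
by Baire, although all its compact subsets are. A Borel map `f` with range in `E` pushes `μ`
forward to a finite nonzero measure carried by `E`; by inner regularity it charges some compact
`K ⊆ E`, so `f⁻¹(K)` has positive `μ`-measure and is not in `I`. On `[0,1]` take `μ = λ`; on the
square take `μ = H²`, which vanishes on every set of finite `H¹`-measure. -/

section Ideals

variable {X : Type*} [TopologicalSpace X] [MeasurableSpace X]

theorem Jzero_subset_Jfin (μ : Measure X) : Jzero μ ⊆ Jfin μ :=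
  fun _ ⟨hA, K, hK, hAK⟩ => ⟨hA, K, fun n => ⟨(hK n).1, (hK n).2.trans_lt zero_lt_top⟩, hAK⟩

theorem mem_Jzero_of_isCompact [T2Space X] [OpensMeasurableSpace X] {μ : Measure X} {K : Set X}
    (hK : IsCompact K) (hμK : μ K = 0) : K ∈ Jzero μ :=
  ⟨hK.isClosed.measurableSet, fun _ => K, fun _ => ⟨hK, hμK⟩, subset_iUnion (fun _ => K) 0⟩

theorem measure_eq_zero_of_mem_Jzero {μ : Measure X} {A : Set X} (hA : A ∈ Jzero μ) :
    μ A = 0 := by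
  obtain ⟨-, K, hK, hAK⟩ := hA
  exact measure_mono_null hAK (measure_iUnion_null fun n => (hK n).2)

theorem IsMeagre.of_mem_Jzero [T2Space X] {μ : Measure X} [μ.IsOpenPosMeasure] {A : Set X}
    (hA : A ∈ Jzero μ) : IsMeagre A := by
  obtain ⟨-, K, hK, hAK⟩ := hA
  refine (IsMeagre.of_isSigmaCompact_null (μ := μ) ⟨K, fun n => (hK n).1, rfl⟩ ?_).mono hAK
  exact measure_iUnion_null fun n => (hK n).2

end Ideals

theorem Jfin_hausdorffMeasure_subset_Jzero {X : Type*} [EMetricSpace X] [MeasurableSpace X]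
    [BorelSpace X] {d₁ d₂ : ℝ} (hd : d₁ < d₂) :
    Jfin (μH[d₁] : Measure X) ⊆ Jzero μH[d₂] :=
  fun _ ⟨hA, K, hK, hAK⟩ =>
    ⟨hA, K, fun n => ⟨(hK n).1,
      (Measure.hausdorffMeasure_zero_or_top hd _).resolve_right (hK n).2.ne⟩, hAK⟩

theorem not_isHomogeneousIdeal_of_subset_Jzero {X : Type*} [TopologicalSpace X] [PolishSpace X]
    [MeasurableSpace X] [BorelSpace X] [Nonempty X] (μ : Measure X) [IsFiniteMeasure μ]
    [μ.IsOpenPosMeasure] {I : Set (Set X)} (hI : I ⊆ Jzero μ) {E : Set X}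
    (hE : MeasurableSet E) (hEres : E ∈ residual X) (hEI : ∀ K ⊆ E, IsCompact K → K ∈ I) :
    ¬ IsHomogeneousIdeal I := by
  intro hhom
  have hEI' : E ∉ I := fun h => not_isMeagre_of_mem_residual hEres (.of_mem_Jzero (hI h))
  obtain ⟨f, hf, hfE, hfI⟩ := hhom E hE hEI'
  have hνE : μ.map f E ≠ 0 := by
    rw [Measure.map_apply hf hE, preimage_eq_univ_iff.2 hfE]
    exact isOpen_univ.measure_ne_zero μ univ_nonempty
  obtain ⟨K, hKE, hK, hνK⟩ :=
    hE.exists_lt_isCompact_of_ne_top (measure_ne_top _ _) (pos_iff_ne_zero.2 hνE)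
  refine hνK.ne' ?_
  rw [Measure.map_apply hf hK.isClosed.measurableSet]
  exact measure_eq_zero_of_mem_Jzero (hI (hfI K (hEI K hKE hK)))

theorem exists_mem_residual_hausdorffMeasure_one_eq_zero (X : Type*) [EMetricSpace X]
    [TopologicalSpace.SeparableSpace X] [Nonempty X] [MeasurableSpace X] [BorelSpace X] :
    ∃ E : Set X, MeasurableSet E ∧ E ∈ residual X ∧ μH[1] E = 0 := by
  obtain ⟨q, hq⟩ := TopologicalSpace.exists_dense_seq X
  set t : ℕ → ℕ → Set X := fun n k => Metric.eball (q k) (2⁻¹ ^ (n + k + 1))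
  have hdiam : ∀ n k, Metric.ediam (t n k) ≤ 2⁻¹ ^ (n + k) := fun n k =>
    Metric.ediam_eball_le.trans_eq <| by
      rw [pow_succ, mul_left_comm, ENNReal.mul_inv_cancel two_ne_zero ofNat_ne_top, mul_one]
  have hopen : ∀ n, IsOpen (⋃ k, t n k) := fun n => isOpen_iUnion fun k => Metric.isOpen_eball
  have hdense : ∀ n, Dense (⋃ k, t n k) := fun n =>
    hq.mono <| range_subset_iff.2 fun k =>
      mem_iUnion.2 ⟨k, Metric.mem_eball_self (ENNReal.pow_pos (by norm_num) _)⟩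
  have hgeom : Tendsto (fun n : ℕ => (2⁻¹ : ℝ≥0∞) ^ n) atTop (𝓝 0) :=
    ENNReal.tendsto_pow_atTop_nhds_zero_of_lt_one (by norm_num)
  refine ⟨⋂ n, ⋃ k, t n k, .iInter fun n => (hopen n).measurableSet,
    countable_iInter_mem.2 fun n => residual_of_dense_open (hopen n) (hdense n),
    le_antisymm ?_ zero_le⟩
  calc μH[1] (⋂ n, ⋃ k, t n k)
      ≤ liminf (fun n => ∑' k, Metric.ediam (t n k) ^ (1 : ℝ)) atTop :=
        Measure.hausdorffMeasure_le_liminf_tsum 1 _ _ hgeom t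
          (.of_forall fun n k => (hdiam n k).trans (pow_le_pow_right_of_le_one'
            (ENNReal.inv_le_one.2 one_le_two) (Nat.le_add_right n k)))
          (.of_forall fun n => iInter_subset _ n)
    _ ≤ liminf (fun n => 2⁻¹ ^ n * 2) atTop := by
        refine liminf_le_liminf (.of_forall fun n => ?_)
        calc ∑' k, Metric.ediam (t n k) ^ (1 : ℝ) ≤ ∑' k, (2⁻¹ : ℝ≥0∞) ^ (n + k) :=
              ENNReal.tsum_le_tsum fun k => by rw [ENNReal.rpow_one]; exact hdiam n k
          _ = 2⁻¹ ^ n * 2 := by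
              simp_rw [pow_add, ENNReal.tsum_mul_left, ENNReal.tsum_geometric_two]
    _ = 0 := by
        simpa using (ENNReal.Tendsto.mul_const hgeom (.inr (ofNat_ne_top (n := 2)))).liminf_eq

theorem Convex.measure_image_val_ne_zero {E : Type*} [TopologicalSpace E] [AddCommGroup E]
    [Module ℝ E] [IsTopologicalAddGroup E] [ContinuousSMul ℝ E] [MeasurableSpace E]
    {S : Set E} (hS : Convex ℝ S) (hint : (interior S).Nonempty) (μ : Measure E)
    [μ.IsOpenPosMeasure] {U : Set S} (hU : IsOpen U) (hne : U.Nonempty) :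
    μ (Subtype.val '' U) ≠ 0 := by
  obtain ⟨V, hV, rfl⟩ := isOpen_induced_iff.1 hU
  obtain ⟨x, hx⟩ := hne
  have hx' : (x : E) ∈ closure (interior S) := by
    rw [hS.closure_interior_eq_closure_of_nonempty_interior hint]
    exact subset_closure x.2
  refine fun h => (hV.inter isOpen_interior).measure_ne_zero μ
    (mem_closure_iff.1 hx' V hV hx) (measure_mono_null ?_ h)
  rintro z ⟨hzV, hzS⟩
  exact ⟨⟨z, interior_subset hzS⟩, hzV, rfl⟩

namespace unitInterval

instance : (volume : Measure unitInterval).IsOpenPosMeasure :=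
  ⟨fun _ hU hne => by
    rw [volume_apply]
    exact (convex_Icc 0 1).measure_image_val_ne_zero (by simp) volume hU hne⟩

theorem volume_eq_hausdorffMeasure_one (s : Set unitInterval) : volume s = μH[1] s := by
  rw [volume_apply, ← hausdorffMeasure_real,
    isometry_subtype_coe.hausdorffMeasure_image (.inl zero_le_one)]

end unitInterval

theorem sqSet_eq_preimage :
    SqSet = EuclideanSpace.equiv (Fin 2) ℝ ⁻¹' univ.pi fun _ => Icc 0 1 := by
  ext x
  simp only [SqSet, mem_preimage, mem_univ_pi]
  rfl

theorem isCompact_sqSet : IsCompact SqSet := by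
  rw [sqSet_eq_preimage]
  exact (EuclideanSpace.equiv (Fin 2) ℝ).toHomeomorph.isCompact_preimage.2
    (isCompact_univ_pi fun _ => isCompact_Icc)

theorem convex_sqSet : Convex ℝ SqSet := by
  rw [sqSet_eq_preimage]
  exact (convex_pi fun _ _ => convex_Icc 0 1).linear_preimage
    (EuclideanSpace.equiv (Fin 2) ℝ).toLinearMap

theorem interior_sqSet_nonempty : (interior SqSet).Nonempty := by
  rw [sqSet_eq_preimage]
  refine .mono (preimage_interior_subset_interior_preimage
    (EuclideanSpace.equiv (Fin 2) ℝ).continuous) ?_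
  rw [interior_pi_set finite_univ]
  exact (EuclideanSpace.equiv (Fin 2) ℝ).surjective.nonempty_preimage.2 <|
    univ_pi_nonempty_iff.2 fun _ => by simp

instance : Nonempty SqSet := (interior_sqSet_nonempty.mono interior_subset).to_subtype

instance : CompactSpace SqSet := isCompact_iff_compactSpace.1 isCompact_sqSet

instance : (μH[2] : Measure (EuclideanSpace ℝ (Fin 2))).IsAddHaarMeasure := by
  exact_mod_cast
    (inferInstance : (μH[(2 : ℕ)] : Measure (EuclideanSpace ℝ (Fin 2))).IsAddHaarMeasure)

instance : IsFiniteMeasure (μH[2] : Measure SqSet) := ⟨by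
  rw [← isometry_subtype_coe.hausdorffMeasure_image (.inl zero_le_two), image_univ,
    Subtype.range_coe]
  exact isCompact_sqSet.measure_lt_top⟩

instance : (μH[2] : Measure SqSet).IsOpenPosMeasure :=
  ⟨fun _ hU hne => by
    rw [← isometry_subtype_coe.hausdorffMeasure_image (.inl zero_le_two)]
    exact convex_sqSet.measure_image_val_ne_zero interior_sqSet_nonempty _ hU hne⟩

/-- Corollary 6.2: the σ-ideal `J₀(λ)` on `[0,1]` is not homogeneous, and the σ-ideals
`J₀(H¹)` and `J_f(H¹)` on the Euclidean square `[0,1]²` are not homogeneous. -/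
theorem statement9 :
    ¬ IsHomogeneousIdeal (Jzero (volume : Measure unitInterval)) ∧
    ¬ IsHomogeneousIdeal (Jzero (μH[1] : Measure SqSet)) ∧
    ¬ IsHomogeneousIdeal (Jfin (μH[1] : Measure SqSet)) := by
  obtain ⟨E, hE, hEres, hE0⟩ := exists_mem_residual_hausdorffMeasure_one_eq_zero unitInterval
  obtain ⟨F, hF, hFres, hF0⟩ := exists_mem_residual_hausdorffMeasure_one_eq_zero SqSet
  have hJfin : Jfin (μH[1] : Measure SqSet) ⊆ Jzero μH[2] :=
    Jfin_hausdorffMeasure_subset_Jzero one_lt_two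
  have hFJ : ∀ K ⊆ F, IsCompact K → K ∈ Jzero (μH[1] : Measure SqSet) := fun K hKF hK =>
    mem_Jzero_of_isCompact hK (measure_mono_null hKF hF0)
  refine ⟨not_isHomogeneousIdeal_of_subset_Jzero volume subset_rfl hE hEres
      fun K hKE hK => mem_Jzero_of_isCompact hK ?_,
    not_isHomogeneousIdeal_of_subset_Jzero μH[2] ((Jzero_subset_Jfin _).trans hJfin) hF hFres hFJ,
    not_isHomogeneousIdeal_of_subset_Jzero μH[2] hJfin hF hFres
      fun K hKF hK => Jzero_subset_Jfin _ (hFJ K hKF hK)⟩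
  rw [unitInterval.volume_eq_hausdorffMeasure_one]
  exact measure_mono_null hKE hE0
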